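/- Let (X,d) be a compact metric space and L a closed subset of X̄. Then the Bowen ∞-entropy of L with respect to d equals the topological entropy of L: H^B_{d,∞}(L) = H^t_X(L). -/
import Mathlib


open Set Filter Topology
open scoped ENNReal NNReal

/-- An open cover of a topological space: a family of open sets whose union is the whole space. -/
def IsOpenCover {Z : Type*} [TopologicalSpace Z] (𝒰 : Set (Set Z)) : Prop :=
  (∀ U ∈ 𝒰, IsOpen U) ∧ ⋃₀ 𝒰 = Set.univ

/-- `coverNum S 𝒰` : the minimal cardinality `N_{S/Z}(𝒰)` of a finite subfamily of `𝒰`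
whose union contains `S` (junk value `0` if there is no such finite subfamily). -/
noncomputable def coverNum {Z : Type*} (S : Set Z) (𝒰 : Set (Set Z)) : ℕ :=
  sInf {m | ∃ F : Finset (Set Z), ↑F ⊆ 𝒰 ∧ S ⊆ ⋃₀ (F : Set (Set Z)) ∧ F.card = m}

/-- The cover `𝒰̄ⁿ` of the sequence space `ℕ → Z`, consisting of the sets
`U_{i_0} × ⋯ × U_{i_{n-1}} × Z × Z × ⋯` with the `U_{i_j}` members of `𝒰`. -/
def seqCover {Z : Type*} (𝒰 : Set (Set Z)) (n : ℕ) : Set (Set (ℕ → Z)) :=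
  {V | ∃ U : ℕ → Set Z, (∀ i < n, U i ∈ 𝒰) ∧ V = {x : ℕ → Z | ∀ i < n, x i ∈ U i}}

/-- The topological entropy `H^t(S,𝒰)` of `S ⊆ Z̄ = ℕ → Z` relative to the cover `𝒰`. -/
noncomputable def entropyRel {Z : Type*} (S : Set (ℕ → Z)) (𝒰 : Set (Set Z)) : ℝ≥0∞ :=
  Filter.atTop.limsup fun n : ℕ =>
    ENNReal.ofReal ((1 / n : ℝ) * Real.log (coverNum S (seqCover 𝒰 n)))

/-- The topological entropy `H^t_Z(S)` of `S` as a subset of the sequence space `Z̄ = ℕ → Z`. -/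
noncomputable def topEntropy (Z : Type*) [TopologicalSpace Z] (S : Set (ℕ → Z)) : ℝ≥0∞ :=
  ⨆ (𝒰 : Set (Set Z)) (_ : IsOpenCover 𝒰), entropyRel S 𝒰


/-- A compatible semimetric on a topological space `Z`: a symmetric, reflexive, triangle-inequality
function `γ : Z × Z → [0,∞)` whose induced topology (generated by its open balls) is contained in
the topology of `Z`, i.e. every `γ`-ball is open in `Z`. -/
structure IsCompatibleSemimetric (Z : Type*) [TopologicalSpace Z] (γ : Z → Z → ℝ) : Prop where
  nonneg : ∀ x y, 0 ≤ γ x y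
  refl : ∀ x, γ x x = 0
  symm : ∀ x y, γ x y = γ y x
  triangle : ∀ x y z, γ x z ≤ γ x y + γ y z
  isOpen_ball : ∀ x : Z, ∀ ε : ℝ, 0 < ε → IsOpen {y | γ x y < ε}

/-- `sepNum K γ ε` : the largest cardinality `N^s(K,γ,ε)` of an `ε`-separated subset of `K`
(junk value `0` if the cardinalities are unbounded). -/
noncomputable def sepNum {Z : Type*} (K : Set Z) (γ : Z → Z → ℝ) (ε : ℝ) : ℕ :=
  sSup {m | ∃ F : Finset Z, ↑F ⊆ K ∧ (∀ x ∈ F, ∀ y ∈ F, x ≠ y → ε ≤ γ x y) ∧ F.card = m}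

/-- The Bowen entropy `H^B_Γ(K)` of a compact set `K` with respect to the sequence of semimetrics
`Γ = (γ_n)`: the limit as `ε → 0⁺` (equivalently, the supremum over `ε > 0`) of
`limsup_n (1/n) log N^s(K,γ_n,ε)`. -/
noncomputable def bowenEntropyCompact {Z : Type*} (γ : ℕ → Z → Z → ℝ) (K : Set Z) : ℝ≥0∞ :=
  ⨆ ε ∈ Set.Ioi (0 : ℝ), Filter.atTop.limsup fun n : ℕ =>
    ENNReal.ofReal ((1 / n : ℝ) * Real.log (sepNum K (γ n) ε))

/-- The Bowen entropy `H^B_Γ(S)` of an arbitrary subset `S`: the supremum of `H^B_Γ(K)` over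
compact subsets `K ⊆ S`. -/
noncomputable def bowenEntropy {Z : Type*} [TopologicalSpace Z] (γ : ℕ → Z → Z → ℝ)
    (S : Set Z) : ℝ≥0∞ :=
  ⨆ (K : Set Z) (_ : IsCompact K ∧ K ⊆ S), bowenEntropyCompact γ K

/-- The semimetric `d_{n,p}` on the sequence space `ℕ → X` (`p = ⊤` gives `d_{n,∞}`). -/
noncomputable def seqSemimetric {X : Type*} [PseudoMetricSpace X] (p : ℝ≥0∞) (n : ℕ)
    (x y : ℕ → X) : ℝ :=
  if p = ⊤ then (((Finset.range n).sup fun i => nndist (x i) (y i) : ℝ≥0) : ℝ)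
  else (∑ i ∈ Finset.range n, dist (x i) (y i) ^ p.toReal) ^ (1 / p.toReal)

/-- The Bowen `p`-entropy `H^B_{d,p}(S)` of a subset `S` of the sequence space `ℕ → X`. -/
noncomputable def bowenPEntropy {X : Type*} [PseudoMetricSpace X] (p : ℝ≥0∞)
    (S : Set (ℕ → X)) : ℝ≥0∞ :=
  bowenEntropy (fun n => seqSemimetric p n) S

section Aux

variable {X : Type*} [MetricSpace X]

lemma seqsm_term_le {n i : ℕ} (hi : i < n) (x y : ℕ → X) :
    dist (x i) (y i) ≤ seqSemimetric ⊤ n x y := by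
  unfold seqSemimetric; rw [if_pos rfl]
  rw [dist_nndist]
  exact_mod_cast Finset.le_sup (f := fun i => nndist (x i) (y i)) (Finset.mem_range.mpr hi)

lemma seqsm_lt {n : ℕ} {δ : ℝ} (hδ : 0 < δ) {x y : ℕ → X}
    (h : ∀ i < n, dist (x i) (y i) < δ) : seqSemimetric ⊤ n x y < δ := by
  unfold seqSemimetric; rw [if_pos rfl]
  have hd : (Finset.range n).sup (fun i => nndist (x i) (y i)) < δ.toNNReal := by
    rw [Finset.sup_lt_iff (by simpa using Real.toNNReal_pos.mpr hδ)]
    intro i hi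
    rw [← NNReal.coe_lt_coe, Real.coe_toNNReal _ hδ.le, coe_nndist]
    exact h i (Finset.mem_range.mp hi)
  have := NNReal.coe_lt_coe.mpr hd
  rwa [Real.coe_toNNReal _ hδ.le] at this

lemma seqsm_self (n : ℕ) (x : ℕ → X) : seqSemimetric ⊤ n x x = 0 := by
  simp [seqSemimetric]

lemma seqsm_symm (n : ℕ) (x y : ℕ → X) :
    seqSemimetric ⊤ n x y = seqSemimetric ⊤ n y x := by
  simp [seqSemimetric, nndist_comm]

lemma log_nat_mono {a b : ℕ} (h : a ≤ b) : Real.log a ≤ Real.log b := by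
  rcases Nat.eq_zero_or_pos a with rfl | ha
  · simpa using Real.log_natCast_nonneg b
  · exact Real.log_le_log (by exact_mod_cast ha) (by exact_mod_cast h)

lemma limsup_entropy_mono {a b : ℕ → ℕ} (h : ∀ n, a n ≤ b n) :
    (Filter.atTop.limsup fun n : ℕ => ENNReal.ofReal ((1 / n : ℝ) * Real.log (a n))) ≤
    Filter.atTop.limsup fun n : ℕ => ENNReal.ofReal ((1 / n : ℝ) * Real.log (b n)) := by
  refine Filter.limsup_le_limsup (Filter.Eventually.of_forall fun n => ?_)
  exact ENNReal.ofReal_le_ofReal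
    (mul_le_mul_of_nonneg_left (log_nat_mono (h n)) (by positivity))

lemma isOpen_of_mem_seqCover {Z : Type*} [TopologicalSpace Z] {𝒰 : Set (Set Z)}
    (h : ∀ U ∈ 𝒰, IsOpen U) {n : ℕ} {V : Set (ℕ → Z)} (hV : V ∈ seqCover 𝒰 n) : IsOpen V := by
  obtain ⟨U, hU, rfl⟩ := hV
  have he : {x : ℕ → Z | ∀ i < n, x i ∈ U i}
      = ⋂ i ∈ Finset.range n, (fun x : ℕ → Z => x i) ⁻¹' U i := by
    ext x; simp
  rw [he]
  exact isOpen_biInter_finset fun i hi =>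
    ((h _ (hU i (Finset.mem_range.mp hi))).preimage (continuous_apply i))

lemma exists_finite_subcover_sets {Z : Type*} [TopologicalSpace Z] {L : Set Z}
    (hL : IsCompact L) {𝒱 : Set (Set Z)} (hopen : ∀ V ∈ 𝒱, IsOpen V) (hcov : L ⊆ ⋃₀ 𝒱) :
    ∃ F : Finset (Set Z), ↑F ⊆ 𝒱 ∧ L ⊆ ⋃₀ (F : Set (Set Z)) := by
  classical
  rw [sUnion_eq_iUnion] at hcov
  obtain ⟨t, ht⟩ := hL.elim_finite_subcover (fun V : 𝒱 => (V : Set Z))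
    (fun V => hopen V V.2) hcov
  refine ⟨t.image (fun V : 𝒱 => (V : Set Z)), ?_, ?_⟩
  · intro W hW
    simp only [Finset.coe_image, mem_image, Finset.mem_coe] at hW
    obtain ⟨V, _, rfl⟩ := hW
    exact V.2
  · intro x hx
    obtain ⟨V, hVt, hxV⟩ := mem_iUnion₂.mp (ht hx)
    exact ⟨V, by simp only [Finset.coe_image, mem_image, Finset.mem_coe]; exact ⟨V, hVt, rfl⟩, hxV⟩

lemma coverNum_le {Z : Type*} {S : Set Z} {𝒰 : Set (Set Z)} {F : Finset (Set Z)}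
    (h1 : ↑F ⊆ 𝒰) (h2 : S ⊆ ⋃₀ (F : Set (Set Z))) : coverNum S 𝒰 ≤ F.card :=
  Nat.sInf_le ⟨F, h1, h2, rfl⟩

lemma coverNum_spec {Z : Type*} {S : Set Z} {𝒰 : Set (Set Z)}
    (hne : ∃ F : Finset (Set Z), ↑F ⊆ 𝒰 ∧ S ⊆ ⋃₀ (F : Set (Set Z))) :
    ∃ F : Finset (Set Z), ↑F ⊆ 𝒰 ∧ S ⊆ ⋃₀ (F : Set (Set Z)) ∧ F.card = coverNum S 𝒰 := by
  obtain ⟨F, h1, h2⟩ := hne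
  have : coverNum S 𝒰 ∈ {m | ∃ F : Finset (Set Z), ↑F ⊆ 𝒰 ∧ S ⊆ ⋃₀ (F : Set (Set Z)) ∧ F.card = m} :=
    Nat.sInf_mem ⟨F.card, F, h1, h2, rfl⟩
  obtain ⟨G, hg1, hg2, hg3⟩ := this
  exact ⟨G, hg1, hg2, hg3⟩

lemma sepNum_le {Z : Type*} {K : Set Z} {γ : Z → Z → ℝ} {ε : ℝ} {N : ℕ}
    (h : ∀ F : Finset Z, ↑F ⊆ K → (∀ x ∈ F, ∀ y ∈ F, x ≠ y → ε ≤ γ x y) → F.card ≤ N) :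
    sepNum K γ ε ≤ N := by
  refine csSup_le ⟨0, ⟨(∅ : Finset Z), by simp, by simp, rfl⟩⟩ ?_
  rintro m ⟨F, h1, h2, rfl⟩
  exact h F h1 h2

lemma sepNum_mem {Z : Type*} {K : Set Z} {γ : Z → Z → ℝ} {ε : ℝ} {N : ℕ}
    (h : ∀ F : Finset Z, ↑F ⊆ K → (∀ x ∈ F, ∀ y ∈ F, x ≠ y → ε ≤ γ x y) → F.card ≤ N) :
    ∃ F : Finset Z, ↑F ⊆ K ∧ (∀ x ∈ F, ∀ y ∈ F, x ≠ y → ε ≤ γ x y) ∧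
      F.card = sepNum K γ ε := by
  have hmem : sepNum K γ ε ∈
      {m | ∃ F : Finset Z, ↑F ⊆ K ∧ (∀ x ∈ F, ∀ y ∈ F, x ≠ y → ε ≤ γ x y) ∧ F.card = m} := by
    refine Nat.sSup_mem ⟨0, ⟨(∅ : Finset Z), by simp, by simp, rfl⟩⟩
      ⟨N, ?_⟩
    rintro m ⟨F, h1, h2, rfl⟩
    exact h F h1 h2
  obtain ⟨F, h1, h2, h3⟩ := hmem
  exact ⟨F, h1, h2, h3⟩

end Aux

theorem bowenInftyEntropy_eq_topEntropy {X : Type*} [MetricSpace X] [CompactSpace X]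
    (L : Set (ℕ → X)) (hL : IsClosed L) :
    bowenPEntropy ⊤ L = topEntropy X L := by
  classical
  have hLc : IsCompact L := hL.isCompact
  apply le_antisymm
  · -- Bowen ≤ topological
    rw [bowenPEntropy, bowenEntropy]
    refine iSup₂_le fun K hK => ?_
    rw [bowenEntropyCompact]
    refine iSup₂_le fun ε hε => ?_
    rw [mem_Ioi] at hε
    -- cover by balls of radius ε/3
    set 𝒰 : Set (Set X) := Set.range (fun z : X => Metric.ball z (ε / 3)) with h𝒰
    have hcov : IsOpenCover 𝒰 := by
      constructor
      · rintro U ⟨z, rfl⟩; exact Metric.isOpen_ball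
      · apply eq_univ_of_forall; intro z
        exact ⟨Metric.ball z (ε / 3), ⟨z, rfl⟩, Metric.mem_ball_self (by linarith)⟩
    refine le_trans ?_ (le_iSup₂ (f := fun 𝒱 (_ : IsOpenCover 𝒱) => entropyRel L 𝒱) 𝒰 hcov)
    rw [entropyRel]
    apply limsup_entropy_mono
    intro n
    -- sepNum ≤ coverNum
    have hLsub : L ⊆ ⋃₀ seqCover 𝒰 n := by
      intro x _
      have hz : ∀ z : X, ∃ U ∈ 𝒰, z ∈ U := fun z =>
        ⟨Metric.ball z (ε / 3), ⟨z, rfl⟩, Metric.mem_ball_self (by linarith)⟩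
      choose u hu hzu using hz
      exact ⟨{y | ∀ i < n, y i ∈ u (x i)},
        ⟨fun i => u (x i), fun i _ => hu (x i), rfl⟩, fun i _ => hzu (x i)⟩
    obtain ⟨G, hG1, hG2, hG3⟩ :=
      coverNum_spec (exists_finite_subcover_sets hLc
        (fun V hV => isOpen_of_mem_seqCover hcov.1 hV) hLsub)
    rw [← hG3]
    apply sepNum_le
    intro F hF hsep
    have hmap : ∀ f : ℕ → X, ∃ V, f ∈ F → V ∈ G ∧ f ∈ V := by
      intro f
      by_cases hf : f ∈ F
      · obtain ⟨V, hVG, hfV⟩ := hG2 (hK.2 (hF hf))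
        exact ⟨V, fun _ => ⟨hVG, hfV⟩⟩
      · exact ⟨∅, fun h => absurd h hf⟩
    choose φ hφ using hmap
    refine Finset.card_le_card_of_injOn φ (fun f hf => (hφ f hf).1) ?_
    intro f hf f' hf' heq
    by_contra hne
    have hf₀ : f ∈ F := Finset.mem_coe.mp hf
    have hf'₀ : f' ∈ F := Finset.mem_coe.mp hf'
    obtain ⟨U, hU, hVeq⟩ := hG1 (hφ f hf₀).1
    have hfm : f ∈ {x : ℕ → X | ∀ i < n, x i ∈ U i} := by
      rw [← hVeq]; exact (hφ f hf₀).2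
    have hf'm : f' ∈ {x : ℕ → X | ∀ i < n, x i ∈ U i} := by
      rw [← hVeq, heq]; exact (hφ f' hf'₀).2
    have hlt : seqSemimetric ⊤ n f f' < ε := by
      apply seqsm_lt hε
      intro i hi
      obtain ⟨z, hz⟩ := hU i hi
      have hz' : Metric.ball z (ε / 3) = U i := hz
      have h1 : f i ∈ Metric.ball z (ε / 3) := by rw [hz']; exact hfm i hi
      have h2 : f' i ∈ Metric.ball z (ε / 3) := by rw [hz']; exact hf'm i hi
      rw [Metric.mem_ball] at h1 h2
      calc dist (f i) (f' i) ≤ dist (f i) z + dist (f' i) z := dist_triangle_right _ _ _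
        _ < ε / 3 + ε / 3 := add_lt_add h1 h2
        _ < ε := by linarith
    linarith [hsep f hf₀ f' hf'₀ hne]
  · -- topological ≤ Bowen
    rw [topEntropy]
    refine iSup₂_le fun 𝒰 hcov => ?_
    obtain ⟨δ, hδ, hleb⟩ := lebesgue_number_lemma_of_metric_sUnion (isCompact_univ (X := X))
      hcov.1 (by rw [hcov.2])
    have hleb' : ∀ z : X, ∃ t ∈ 𝒰, Metric.ball z δ ⊆ t := fun z => hleb z (mem_univ z)
    choose t ht htb using hleb'
    have key : ∀ n : ℕ, coverNum L (seqCover 𝒰 n) ≤ sepNum L (seqSemimetric ⊤ n) δ := by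
      intro n
      set B : (ℕ → X) → Set (ℕ → X) := fun c => {x | ∀ i < n, dist (x i) (c i) < δ / 2} with hB
      have hBopen : ∀ c, IsOpen (B c) := by
        intro c
        have he : B c = ⋂ i ∈ Finset.range n,
            (fun x : ℕ → X => x i) ⁻¹' Metric.ball (c i) (δ / 2) := by
          ext x; simp [hB, Metric.mem_ball]
        rw [he]
        exact isOpen_biInter_finset fun i _ => Metric.isOpen_ball.preimage (continuous_apply i)
      obtain ⟨T, hT⟩ := hLc.elim_finite_subcover B hBopen
        (fun x _ => mem_iUnion.mpr ⟨x, fun i _ => by simpa using half_pos hδ⟩)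
      -- every δ-separated subset of L has card ≤ T.card
      have hbdd : ∀ F : Finset (ℕ → X), ↑F ⊆ L →
          (∀ x ∈ F, ∀ y ∈ F, x ≠ y → δ ≤ seqSemimetric ⊤ n x y) → F.card ≤ T.card := by
        intro F hFL hsep
        have hmap : ∀ f : ℕ → X, ∃ c, f ∈ F → c ∈ T ∧ f ∈ B c := by
          intro f
          by_cases hf : f ∈ F
          · obtain ⟨c, hcT, hfc⟩ := mem_iUnion₂.mp (hT (hFL hf))
            exact ⟨c, fun _ => ⟨hcT, hfc⟩⟩
          · exact ⟨f, fun h => absurd h hf⟩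
        choose φ hφ using hmap
        refine Finset.card_le_card_of_injOn φ (fun f hf => (hφ f hf).1) ?_
        intro f hf f' hf' heq
        by_contra hne
        have hf₀ : f ∈ F := Finset.mem_coe.mp hf
        have hf'₀ : f' ∈ F := Finset.mem_coe.mp hf'
        have h1 := (hφ f hf₀).2
        have h2 := (hφ f' hf'₀).2
        have hlt : seqSemimetric ⊤ n f f' < δ := by
          apply seqsm_lt hδ
          intro i hi
          calc dist (f i) (f' i) ≤ dist (f i) (φ f i) + dist (f' i) (φ f i) :=
                dist_triangle_right _ _ _
            _ < δ / 2 + δ / 2 := add_lt_add (h1 i hi) (by rw [heq]; exact h2 i hi)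
            _ = δ := add_halves δ
        linarith [hsep f hf₀ f' hf'₀ hne]
      obtain ⟨F, hFL, hsep, hcard⟩ := sepNum_mem hbdd
      -- maximality: F is δ-spanning for L
      have hspan : ∀ x ∈ L, ∃ f ∈ F, seqSemimetric ⊤ n x f < δ := by
        intro x hx
        by_contra hcon
        push_neg at hcon
        have hxF : x ∉ F := by
          intro hxF
          have := hcon x hxF
          rw [seqsm_self] at this
          linarith
        have hnew : (F.card + 1) ∈
            {m | ∃ F' : Finset (ℕ → X), ↑F' ⊆ L ∧
              (∀ a ∈ F', ∀ b ∈ F', a ≠ b → δ ≤ seqSemimetric ⊤ n a b) ∧ F'.card = m} := by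
          refine ⟨insert x F, ?_, ?_, Finset.card_insert_of_notMem hxF⟩
          · intro y hy
            rcases Finset.mem_insert.mp (Finset.mem_coe.mp hy) with rfl | hy'
            · exact hx
            · exact hFL hy'
          · intro a ha b hb hab
            rcases Finset.mem_insert.mp ha with rfl | ha' <;>
              rcases Finset.mem_insert.mp hb with rfl | hb'
            · exact absurd rfl hab
            · exact hcon b hb'
            · rw [seqsm_symm]; exact hcon a ha'
            · exact hsep a ha' b hb' hab
        have hub : BddAbove {m | ∃ F' : Finset (ℕ → X), ↑F' ⊆ L ∧
            (∀ a ∈ F', ∀ b ∈ F', a ≠ b → δ ≤ seqSemimetric ⊤ n a b) ∧ F'.card = m} := by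
          refine ⟨T.card, ?_⟩
          rintro m ⟨F', h1, h2, rfl⟩
          exact hbdd F' h1 h2
        have := le_csSup hub hnew
        rw [sepNum] at hcard
        omega
      -- build the cover from F
      set V : (ℕ → X) → Set (ℕ → X) := fun f => {y | ∀ i < n, y i ∈ t (f i)} with hV
      have hVseq : ∀ f : ℕ → X, V f ∈ seqCover 𝒰 n :=
        fun f => ⟨fun i => t (f i), fun i _ => ht (f i), rfl⟩
      calc coverNum L (seqCover 𝒰 n) ≤ (F.image V).card := by
            apply coverNum_le
            · intro W hW
              simp only [Finset.coe_image, mem_image, Finset.mem_coe] at hW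
              obtain ⟨f, _, rfl⟩ := hW
              exact hVseq f
            · intro x hx
              obtain ⟨f, hfF, hfd⟩ := hspan x hx
              refine ⟨V f, ?_, ?_⟩
              · simp only [Finset.coe_image, mem_image, Finset.mem_coe]
                exact ⟨f, hfF, rfl⟩
              · intro i hi
                apply htb (f i)
                rw [Metric.mem_ball]
                calc dist (x i) (f i) ≤ seqSemimetric ⊤ n x f := seqsm_term_le hi x f
                  _ < δ := hfd
        _ ≤ F.card := Finset.card_image_le
        _ = sepNum L (seqSemimetric ⊤ n) δ := hcard
    refine le_trans (limsup_entropy_mono key) ?_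
    rw [bowenPEntropy, bowenEntropy]
    refine le_trans ?_ (le_iSup₂ (f := fun K (_ : IsCompact K ∧ K ⊆ L) =>
      bowenEntropyCompact (fun n => seqSemimetric ⊤ n) K) L ⟨hLc, subset_rfl⟩)
    rw [bowenEntropyCompact]
    exact le_iSup₂ (f := fun (ε : ℝ) (_ : ε ∈ Set.Ioi (0:ℝ)) =>
      Filter.atTop.limsup fun n : ℕ => ENNReal.ofReal
        ((1 / n : ℝ) * Real.log (sepNum L (seqSemimetric ⊤ n) ε))) δ (mem_Ioi.mpr hδ)
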